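/- Let X = {-1,1}^ℕ, A(x) = h x₀ + x₀ Σ_{n≥1} aₙ xₙ with Σ|aₙ| < ∞, and set J_{ij} = a_{|i-j|}, h_i = h, and H_n(x,y) = Σ_{0≤i<j≤n-1} J_{ij} x_i x_j + Σ_{0≤i≤n-1} h x_i + Σ_{0≤i≤n-1, j≥n} J_{ij} x_i y_j. Then for all x, y ∈ X and all n ≥ 1: H_n(x,y) = Sₙ(A)([x|y]ₙ), where Sₙ(A) = Σ_{k=0}^{n-1} A ∘ σᵏ and [x|y]ₙ = (x₀,…,x_{n-1},yₙ,y_{n+1},…). -/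

import Mathlib

/-- The symbolic space `{-1,1}^ℕ`, with `true ↔ 1` and `false ↔ -1`. -/
abbrev Xsp : Type := ℕ → Bool

/-- The spin value of a symbol. -/
noncomputable def spin (b : Bool) : ℝ := if b then 1 else -1

/-- The left shift. -/
def shft (x : Xsp) : Xsp := fun n => x (n + 1)

/-- `[x|y]ₙ = (x₀,…,x_{n-1},yₙ,y_{n+1},…)`. -/
def pasteX (n : ℕ) (x y : Xsp) : Xsp := fun k => if k < n then x k else y k

/-- The Birkhoff sum `Sₙ(A) = Σ_{k<n} A ∘ σᵏ`. -/
noncomputable def birk (A : Xsp → ℝ) (n : ℕ) (z : Xsp) : ℝ :=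
  ∑ k ∈ Finset.range n, A (shft^[k] z)

/-- The Ising-type potential `A(z) = h z₀ + z₀ Σ_{m≥1} a_m z_m`. -/
noncomputable def isingPot (h : ℝ) (a : ℕ → ℝ) (z : Xsp) : ℝ :=
  h * spin (z 0) + spin (z 0) * ∑' m : ℕ, a (m + 1) * spin (z (m + 1))

/-- The Ising Hamiltonian with boundary condition `y`:
`Hₙ(x,y) = Σ_{0≤i<j≤n-1} a_{j-i} x_i x_j + Σ_{i<n} h x_i + Σ_{i<n, j≥n} a_{j-i} x_i y_j`. -/
noncomputable def isingH (h : ℝ) (a : ℕ → ℝ) (n : ℕ) (x y : Xsp) : ℝ :=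
  (∑ j ∈ Finset.range n, ∑ i ∈ Finset.range j, a (j - i) * spin (x i) * spin (x j))
    + (∑ i ∈ Finset.range n, h * spin (x i))
    + (∑ i ∈ Finset.range n, ∑' k : ℕ, a (n + k - i) * spin (x i) * spin (y (n + k)))

/-!
In `Sₙ(A)([x|y]ₙ)` the `k`-th term `A(σᵏ z)` is the field `h x_k` plus the couplings
`a_{j-k} z_k z_j` of site `k` to every site `j > k`; splitting this series at `j = n` separates
the bonds inside the box (partner `x_j`) from the boundary bonds (partner `y_j`). Summing over `k`
then counts each bond `i < j` exactly once, at its left end, which is `Hₙ(x,y)`.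
-/

open Finset

lemma abs_spin (b : Bool) : |spin b| = 1 := by
  cases b <;> simp [spin]

lemma shft_iterate_apply (k : ℕ) (z : Xsp) (m : ℕ) : shft^[k] z m = z (m + k) := by
  induction k generalizing z with
  | zero => rfl
  | succ k ih => rw [Function.iterate_succ_apply, ih]; rfl

lemma summable_mul_spin {c : ℕ → ℝ} (hc : Summable fun m => |c m|) (s : ℕ → Bool) :
    Summable fun m => c m * spin (s m) :=
  .of_norm_bounded hc fun m => by rw [Real.norm_eq_abs, abs_mul, abs_spin, mul_one]

lemma sum_range_sum_range_eq_sum_range_sum_Ico {M : Type*} [AddCommMonoid M] (n : ℕ)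
    (F : ℕ → ℕ → M) :
    ∑ j ∈ range n, ∑ i ∈ range j, F i j
      = ∑ i ∈ range n, ∑ j ∈ Ico (i + 1) n, F i j := by
  simp only [range_eq_Ico]
  exact (sum_Ico_Ico_comm' 0 n F).symm

lemma isingPot_eq_sum_add_tsum (h : ℝ) {a : ℕ → ℝ} (hsum : Summable fun m => |a m|)
    (z : Xsp) (N : ℕ) :
    isingPot h a z = h * spin (z 0)
      + ∑ m ∈ range N, a (m + 1) * spin (z 0) * spin (z (m + 1))
      + ∑' t, a (t + N + 1) * spin (z 0) * spin (z (t + N + 1)) := by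
  have hsumm := summable_mul_spin ((summable_nat_add_iff 1).2 hsum) (fun m => z (m + 1))
  rw [isingPot, ← hsumm.sum_add_tsum_nat_add N, mul_add, mul_sum, ← tsum_mul_left,
    add_assoc]
  congr 2 <;> [refine sum_congr rfl fun _ _ => ?_; refine tsum_congr fun _ => ?_] <;> ring

lemma isingPot_iterate_shft_pasteX (h : ℝ) {a : ℕ → ℝ} (hsum : Summable fun m => |a m|)
    (x y : Xsp) {n k : ℕ} (hk : k < n) :
    isingPot h a (shft^[k] (pasteX n x y)) = h * spin (x k)
      + ∑ j ∈ Ico (k + 1) n, a (j - k) * spin (x k) * spin (x j)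
      + ∑' t, a (n + t - k) * spin (x k) * spin (y (n + t)) := by
  rw [isingPot_eq_sum_add_tsum h hsum _ (n - k - 1), sum_Ico_eq_sum_range]
  simp only [shft_iterate_apply, pasteX, zero_add, if_pos hk]
  congr 2
  · refine sum_congr (by rw [Nat.sub_sub]) fun m hm => ?_
    rw [mem_range] at hm
    rw [if_pos (by omega), show k + 1 + m - k = m + 1 by omega, show m + 1 + k = k + 1 + m by omega]
  · funext t
    rw [if_neg (by omega), show t + (n - k - 1) + 1 = n + t - k by omega,
      show n + t - k + k = n + t by omega]

theorem ising_hamiltonian_eq_birkhoff_sum_general (h : ℝ) (a : ℕ → ℝ)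
    (hsum : Summable fun m : ℕ => |a m|) (n : ℕ) (x y : Xsp) :
    isingH h a n x y = birk (isingPot h a) n (pasteX n x y) := by
  rw [birk, sum_congr rfl fun k hk =>
      isingPot_iterate_shft_pasteX h hsum x y (mem_range.1 hk),
    sum_add_distrib, sum_add_distrib, isingH,
    sum_range_sum_range_eq_sum_range_sum_Ico]
  ring

theorem ising_hamiltonian_eq_birkhoff_sum (h : ℝ) (a : ℕ → ℝ)
    (hsum : Summable fun m : ℕ => |a m|) (n : ℕ) (hn : 1 ≤ n) (x y : Xsp) :
    isingH h a n x y = birk (isingPot h a) n (pasteX n x y) :=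
  ising_hamiltonian_eq_birkhoff_sum_general h a hsum n x y
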